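/- arXiv:2210.07438 — 3 statements merged into one kernel-verified Lean document; each statement's English description precedes it below -/
import Mathlib

section
/- If a ∈ ℓ^1(ℤ) is a real sequence, then for every λ > 0, the cardinality of {m ∈ ℤ : M′a(m) > 4λ} is at most 3 times the cardinality of {m ∈ ℤ : M_d a(m) > λ}. -/
/-!
Call the dyadic cell of level `N` containing `x` heavy if `∑ |a| > λ 2^N` over it. A heavy cell
of level `N ≥ 1` lies in `E = {M_d a > λ}`, so when `E` is finite the levels of heavy cells are
bounded and each heavy cell lies in a maximal one. If the centred average of radius `r` at `m`
exceeds `4λ`, choose `2r < 2^N ≤ 4r`: the interval `[m - r, m + r]` is covered by two cells of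
level `N`, and one of them is heavy. Hence `m` lies in a maximal heavy cell `Q` or in one of its
two neighbours, i.e. `m = y - s 2^L` with `y ∈ Q ⊆ E`, `s ∈ {-1, 0, 1}` and `L` the level of `Q`.
Since `Q` is also the maximal heavy cell of `y`, `L` is determined by `y`, so the image of
`{-1, 0, 1} × E` under `(s, y) ↦ y - s 2^L` contains `{M′a > 4λ}`.
-/

open scoped ENNReal
open MeasureTheory

/-- An interval in ℤ: a nonempty finite set of consecutive integers. -/
def IsIntervalZ (I : Finset ℤ) : Prop := ∃ n m : ℤ, n ≤ m ∧ I = Finset.Icc n m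

/-- The dyadic interval I_{N,j} = {(j-1)2^N + 1, …, j·2^N}. -/
noncomputable def dyadicI (N : ℕ) (j : ℤ) : Finset ℤ := Finset.Icc ((j - 1) * 2 ^ N + 1) (j * 2 ^ N)

/-- A dyadic interval is one of the form I_{N,j} with N a positive integer. -/
def IsDyadicZ (I : Finset ℤ) : Prop := ∃ N : ℕ, 0 < N ∧ ∃ j : ℤ, I = dyadicI N j

/-- The (uncentered) Hardy–Littlewood maximal operator. -/
noncomputable def Mop (a : ℤ → ℝ) (m : ℤ) : ℝ≥0∞ :=
  ⨆ (I : Finset ℤ) (_ : IsIntervalZ I) (_ : m ∈ I),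
    (∑ n ∈ I, ENNReal.ofReal |a n|) / I.card

/-- The centered Hardy–Littlewood maximal operator
`M′a(m) = sup_{r>0} (1/(2r)) ∑_{n=-r}^{r} |a(m-n)|`. -/
noncomputable def Mc (a : ℤ → ℝ) (m : ℤ) : ℝ≥0∞ :=
  ⨆ (r : ℕ) (_ : 0 < r),
    (∑ n ∈ Finset.Icc (-(r : ℤ)) (r : ℤ), ENNReal.ofReal |a (m - n)|) / (2 * (r : ℝ≥0∞))

/-- The dyadic maximal operator. -/
noncomputable def Md (a : ℤ → ℝ) (m : ℤ) : ℝ≥0∞ :=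
  ⨆ (I : Finset ℤ) (_ : IsDyadicZ I) (_ : m ∈ I),
    (∑ k ∈ I, ENNReal.ofReal |a k|) / I.card

/-- The average `a_I` of a sequence on a finite set. -/
noncomputable def avgI (a : ℤ → ℝ) (I : Finset ℤ) : ℝ := (∑ m ∈ I, a m) / I.card

/-- The sharp maximal operator. -/
noncomputable def Msharp (a : ℤ → ℝ) (m : ℤ) : ℝ≥0∞ :=
  ⨆ (I : Finset ℤ) (_ : IsIntervalZ I) (_ : m ∈ I),
    (∑ n ∈ I, ENNReal.ofReal |a n - avgI a I|) / I.card

open MeasureTheory Finset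

lemma Int.ediv_le_ediv_add_one {a b d : ℤ} (hd : 0 < d) (h : a ≤ b + d) : a / d ≤ b / d + 1 :=
  (Int.ediv_le_ediv hd h).trans_eq (by simpa using Int.add_mul_ediv_right b 1 hd.ne')

lemma Finset.sum_Icc_comp_sub {M : Type*} [AddCommMonoid M] (f : ℤ → M) (m r : ℤ) :
    ∑ n ∈ Icc (-r) r, f (m - n) = ∑ k ∈ Icc (m - r) (m + r), f k :=
  sum_nbij' (m - ·) (m - ·) (by intro n; simp only [mem_Icc]; omega)
    (by intro k; simp only [mem_Icc]; omega) (by simp) (by simp) (by simp)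

lemma Nat.exists_two_pow_between {r : ℕ} (hr : 0 < r) :
    ∃ N, 0 < N ∧ 2 * r < 2 ^ N ∧ 2 ^ N ≤ 4 * r := by
  refine ⟨Nat.log 2 (2 * r) + 1, Nat.succ_pos _, Nat.lt_pow_succ_log_self one_lt_two _, ?_⟩
  have := Nat.pow_log_le_self 2 (by omega : 2 * r ≠ 0)
  rw [pow_succ]
  omega

lemma mem_dyadicI_iff {N : ℕ} {j y : ℤ} : y ∈ dyadicI N j ↔ (y - 1) / 2 ^ N = j - 1 := by
  have hj : j * 2 ^ N = (j - 1) * 2 ^ N + 2 ^ N := by ring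
  rw [Int.ediv_eq_iff_of_pos (by positivity), dyadicI, mem_Icc]
  constructor <;> rintro ⟨h₁, h₂⟩ <;> constructor <;> linarith

lemma card_dyadicI (N : ℕ) (j : ℤ) : (dyadicI N j).card = 2 ^ N := by
  have : j * 2 ^ N + 1 - ((j - 1) * 2 ^ N + 1) = ((2 ^ N : ℕ) : ℤ) := by push_cast; ring
  rw [dyadicI, Int.card_Icc, this, Int.toNat_natCast]

noncomputable def dyadicCell (N : ℕ) (x : ℤ) : Finset ℤ := dyadicI N ((x - 1) / 2 ^ N + 1)

section DyadicCell

variable {N M : ℕ} {x y : ℤ}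

lemma mem_dyadicCell : y ∈ dyadicCell N x ↔ (y - 1) / 2 ^ N = (x - 1) / 2 ^ N := by
  rw [dyadicCell, mem_dyadicI_iff, add_sub_cancel_right]

lemma mem_dyadicCell_self : x ∈ dyadicCell N x := mem_dyadicCell.2 rfl

lemma card_dyadicCell : (dyadicCell N x).card = 2 ^ N := card_dyadicI _ _

lemma dyadicCell_eq_of_mem (h : y ∈ dyadicCell N x) : dyadicCell N y = dyadicCell N x := by
  rw [dyadicCell, dyadicCell, mem_dyadicCell.1 h]

lemma dyadicCell_mono (h : N ≤ M) : dyadicCell N x ⊆ dyadicCell M x := by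
  intro y hy
  obtain ⟨k, rfl⟩ := Nat.exists_eq_add_of_le h
  rw [mem_dyadicCell] at hy ⊢
  rw [pow_add, ← Int.ediv_ediv_of_nonneg (by positivity), hy, Int.ediv_ediv_of_nonneg (by positivity)]

lemma Icc_subset_dyadicCell_union (h : y - x < 2 ^ N) :
    Icc x y ⊆ dyadicCell N x ∪ dyadicCell N y := by
  intro k hk
  rw [mem_Icc] at hk
  have hd : (0 : ℤ) < 2 ^ N := by positivity
  have h₁ := Int.ediv_le_ediv hd (by omega : x - 1 ≤ k - 1)
  have h₂ := Int.ediv_le_ediv hd (by omega : k - 1 ≤ y - 1)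
  have h₃ := Int.ediv_le_ediv_add_one hd (by omega : y - 1 ≤ x - 1 + 2 ^ N)
  rw [mem_union, mem_dyadicCell, mem_dyadicCell]
  omega

lemma exists_add_mul_mem_dyadicCell (h : |y - x| ≤ 2 ^ N) :
    ∃ s ∈ ({-1, 0, 1} : Set ℤ), y + s * 2 ^ N ∈ dyadicCell N x := by
  have hd : (0 : ℤ) < 2 ^ N := by positivity
  rw [abs_le] at h
  have h₁ := Int.ediv_le_ediv_add_one hd (by linarith : y - 1 ≤ x - 1 + 2 ^ N)
  have h₂ := Int.ediv_le_ediv_add_one hd (by linarith : x - 1 ≤ y - 1 + 2 ^ N)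
  refine ⟨(x - 1) / 2 ^ N - (y - 1) / 2 ^ N, ?_, ?_⟩
  · simp only [Set.mem_insert_iff, Set.mem_singleton_iff]
    omega
  · rw [mem_dyadicCell, add_sub_right_comm, Int.add_mul_ediv_right _ _ hd.ne']
    ring

end DyadicCell

def IsHeavyCell (a : ℤ → ℝ) (lam : ℝ) (N : ℕ) (x : ℤ) : Prop :=
  ENNReal.ofReal lam * 2 ^ N < ∑ k ∈ dyadicCell N x, ENNReal.ofReal |a k|

open Classical in
noncomputable def heavyLevel (a : ℤ → ℝ) (lam : ℝ) (b : ℕ) (x : ℤ) : ℕ :=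
  Nat.findGreatest (IsHeavyCell a lam · x) b

section IsHeavyCell

variable {a : ℤ → ℝ} {lam : ℝ} {N : ℕ} {x y : ℤ}

lemma IsHeavyCell.of_mem (hx : IsHeavyCell a lam N x) (hy : y ∈ dyadicCell N x) :
    IsHeavyCell a lam N y := by
  rwa [IsHeavyCell, dyadicCell_eq_of_mem hy]

lemma IsHeavyCell.lt_Md (hN : 0 < N) (hx : IsHeavyCell a lam N x) :
    ENNReal.ofReal lam < Md a x := by
  have hcard : ((dyadicCell N x).card : ℝ≥0∞) = 2 ^ N := by simp [card_dyadicCell]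
  calc ENNReal.ofReal lam
      < (∑ k ∈ dyadicCell N x, ENNReal.ofReal |a k|) / (dyadicCell N x).card := by
        rwa [hcard, ENNReal.lt_div_iff_mul_lt (by simp) (by simp)]
    _ ≤ Md a x :=
        le_iSup₂_of_le (dyadicCell N x) ⟨N, hN, _, rfl⟩ (le_iSup_of_le mem_dyadicCell_self le_rfl)

lemma IsHeavyCell.le_card (hE : {m | ENNReal.ofReal lam < Md a m}.Finite) (hN : 0 < N)
    (hx : IsHeavyCell a lam N x) : N ≤ hE.toFinset.card := by
  have hsub : dyadicCell N x ⊆ hE.toFinset := fun y hy => by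
    simpa using (hx.of_mem hy).lt_Md hN
  calc N ≤ 2 ^ N := Nat.lt_two_pow_self.le
    _ = (dyadicCell N x).card := card_dyadicCell.symm
    _ ≤ hE.toFinset.card := card_le_card hsub

lemma exists_isHeavyCell_of_lt_Mc (h : ENNReal.ofReal (4 * lam) < Mc a x) :
    ∃ N y, 0 < N ∧ IsHeavyCell a lam N y ∧ |x - y| ≤ 2 ^ N := by
  simp only [Mc, lt_iSup_iff] at h
  obtain ⟨r, hr, h⟩ := h
  rw [sum_Icc_comp_sub (fun k => ENNReal.ofReal |a k|),
    ENNReal.lt_div_iff_mul_lt (.inl (by simp [hr.ne'])) (.inl (by finiteness))] at h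
  obtain ⟨N, hN, hrN, hNr⟩ := Nat.exists_two_pow_between hr
  have hrN' : (r : ℤ) ≤ 2 ^ N := by exact_mod_cast hrN.le.trans' (by omega)
  suffices IsHeavyCell a lam N (x - r) ∨ IsHeavyCell a lam N (x + r) by
    rcases this with h' | h'
    · exact ⟨N, _, hN, h', by simpa using hrN'⟩
    · exact ⟨N, _, hN, h', by simpa using hrN'⟩
  by_contra! hlight
  simp only [IsHeavyCell, not_lt] at hlight
  have hcover := Icc_subset_dyadicCell_union (N := N) (x := x - r) (y := x + r)
    (by have : (2 * r : ℤ) < 2 ^ N := by exact_mod_cast hrN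
        omega)
  refine h.not_ge ?_
  calc ∑ k ∈ Icc (x - r) (x + r), ENNReal.ofReal |a k|
      ≤ ∑ k ∈ dyadicCell N (x - r) ∪ dyadicCell N (x + r), ENNReal.ofReal |a k| :=
        sum_le_sum_of_subset hcover
    _ ≤ ∑ k ∈ dyadicCell N (x - r), ENNReal.ofReal |a k| +
          ∑ k ∈ dyadicCell N (x + r), ENNReal.ofReal |a k| :=
        sum_union_inter (f := fun k => ENNReal.ofReal |a k|) ▸ le_self_add
    _ ≤ ENNReal.ofReal lam * 2 ^ N + ENNReal.ofReal lam * 2 ^ N := add_le_add hlight.1 hlight.2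
    _ ≤ ENNReal.ofReal lam * (4 * r) + ENNReal.ofReal lam * (4 * r) := by
        gcongr <;> exact_mod_cast hNr
    _ = ENNReal.ofReal (4 * lam) * (2 * r) := by
        rw [ENNReal.ofReal_mul (by norm_num), ENNReal.ofReal_ofNat]
        ring

lemma isHeavyCell_heavyLevel {b : ℕ} (hNb : N ≤ b) (hx : IsHeavyCell a lam N x) :
    IsHeavyCell a lam (heavyLevel a lam b x) x := by
  classical
  exact Nat.findGreatest_spec (P := (IsHeavyCell a lam · x)) hNb hx

lemma le_heavyLevel {b : ℕ} (hNb : N ≤ b) (hx : IsHeavyCell a lam N x) :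
    N ≤ heavyLevel a lam b x := by
  classical
  exact Nat.le_findGreatest (P := (IsHeavyCell a lam · x)) hNb hx

lemma heavyLevel_eq_of_mem {b : ℕ} (hx : IsHeavyCell a lam (heavyLevel a lam b x) x)
    (hy : y ∈ dyadicCell (heavyLevel a lam b x) x) :
    heavyLevel a lam b y = heavyLevel a lam b x := by
  classical
  refine Nat.findGreatest_eq_iff.2 ⟨Nat.findGreatest_le b, fun _ => hx.of_mem hy, ?_⟩
  intro n hn hnb hny
  have hxn : x ∈ dyadicCell n y :=
    dyadicCell_mono hn.le (dyadicCell_eq_of_mem hy ▸ mem_dyadicCell_self)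
  exact Nat.findGreatest_is_greatest hn hnb (hny.of_mem hxn)

end IsHeavyCell

lemma setOf_lt_Mc_subset_image {a : ℤ → ℝ} {lam : ℝ}
    (hE : {m | ENNReal.ofReal lam < Md a m}.Finite) :
    {m | ENNReal.ofReal (4 * lam) < Mc a m} ⊆
      (fun p : ℤ × ℤ => p.2 - p.1 * 2 ^ heavyLevel a lam hE.toFinset.card p.2) ''
        (({-1, 0, 1} : Set ℤ) ×ˢ {m | ENNReal.ofReal lam < Md a m}) := by
  intro m hm
  obtain ⟨N, x, hN, hx, hmx⟩ := exists_isHeavyCell_of_lt_Mc hm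
  have hNb := hx.le_card hE hN
  set L := heavyLevel a lam hE.toFinset.card x
  have hxL : IsHeavyCell a lam L x := isHeavyCell_heavyLevel hNb hx
  have hNL : N ≤ L := le_heavyLevel hNb hx
  obtain ⟨s, hs, hy⟩ :=
    exists_add_mul_mem_dyadicCell (hmx.trans (pow_le_pow_right₀ one_le_two hNL))
  refine ⟨(s, m + s * 2 ^ L), ⟨hs, (hxL.of_mem hy).lt_Md (hN.trans_le hNL)⟩, ?_⟩
  simp only [heavyLevel_eq_of_mem hxL hy]
  ring

theorem statement2_general (a : ℤ → ℝ) (lam : ℝ) :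
    Measure.count {m : ℤ | ENNReal.ofReal (4 * lam) < Mc a m} ≤
      3 * Measure.count {m : ℤ | ENNReal.ofReal lam < Md a m} := by
  set E := {m : ℤ | ENNReal.ofReal lam < Md a m}
  rcases E.finite_or_infinite with hE | hE
  · calc Measure.count {m : ℤ | ENNReal.ofReal (4 * lam) < Mc a m}
        ≤ Measure.count (_ '' (({-1, 0, 1} : Set ℤ) ×ˢ E)) :=
          measure_mono (setOf_lt_Mc_subset_image hE)
      _ ≤ (({-1, 0, 1} : Set ℤ) ×ˢ E).encard := by
          rw [Measure.count_apply .of_discrete]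
          exact_mod_cast Set.encard_image_le _ _
      _ = 3 * Measure.count E := by
          have : ({-1, 0, 1} : Set ℤ).encard = 3 := by
            norm_num [Set.encard_insert_of_notMem]
          rw [Set.encard_prod, this, Measure.count_apply .of_discrete]
          push_cast
          rfl
  · simp [Measure.count_apply_infinite hE]

/-- `|{M′a > 4λ}| ≤ 3 |{M_d a > λ}|` for `a ∈ ℓ¹(ℤ)`. -/
theorem statement2 (a : ℤ → ℝ) (ha : Summable fun m : ℤ => |a m|)
    (lam : ℝ) (hlam : 0 < lam) :
    Measure.count {m : ℤ | ENNReal.ofReal (4 * lam) < Mc a m} ≤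
      3 * Measure.count {m : ℤ | ENNReal.ofReal lam < Md a m} :=
  statement2_general a lam
end

section
/- Let 1 < p < ∞ and let a : ℤ → ℝ be a sequence such that M_d a ∈ ℓ^p(ℤ). Then there is a constant C depending only on p (one may take C = 3·4^p) such that Σ_{m∈ℤ} (M′a(m))^p ≤ C · Σ_{m∈ℤ} (M_d a(m))^p. -/
open scoped ENNReal
open MeasureTheory

/-!
Write `M''a(m)` for the supremum of the averages of `|a|` over the dyadic intervals `I` whose
threefold enlargement `3I` contains `m`. A centred interval of radius `r` lies in the union of
two adjacent dyadic intervals of length `2^q ≤ 4r`, and the enlargement of each contains the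
centre; hence `M′a ≤ 4 M''a`. If the average over a dyadic `I` exceeds `t`, then `I` lies in the
finite set `{M_d a > t}`, hence in a maximal dyadic interval contained in that set. Maximal dyadic
intervals are disjoint, so `#{M''a > t} ≤ 3 #{M_d a > t}`, and the layer-cake formula turns this
into `∑ (M''a)^p ≤ 3 ∑ (M_d a)^p`.
-/
open scoped Pointwise
open Finset

namespace DyadicMaximal

lemma mem_dyadicI_iff_ediv {N : ℕ} {j x : ℤ} : x ∈ dyadicI N j ↔ (x - 1) / 2 ^ N = j - 1 := by
  rw [Int.ediv_eq_iff_of_pos (by positivity), dyadicI, mem_Icc]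
  constructor <;> rintro ⟨h₁, h₂⟩ <;> constructor <;> linarith

lemma card_dyadicI (N : ℕ) (j : ℤ) : #(dyadicI N j) = 2 ^ N := by
  rw [dyadicI, Int.card_Icc, show j * 2 ^ N + 1 - ((j - 1) * 2 ^ N + 1) = ((2 ^ N : ℕ) : ℤ) by
    push_cast; ring, Int.toNat_natCast]

lemma exists_mem_dyadicI (N : ℕ) (x : ℤ) : ∃ j, x ∈ dyadicI N j :=
  ⟨(x - 1) / 2 ^ N + 1, mem_dyadicI_iff_ediv.2 (by ring)⟩

lemma add_mul_two_pow_mem_dyadicI {N : ℕ} {j x : ℤ} (hx : x ∈ dyadicI N j) (d : ℤ) :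
    x + d * 2 ^ N ∈ dyadicI N (j + d) := by
  rw [mem_dyadicI_iff_ediv] at hx ⊢
  rw [add_sub_right_comm, Int.add_mul_ediv_right _ _ (by positivity), hx]
  ring

lemma dyadicI_subset_of_le {N M : ℕ} {j i x : ℤ} (hNM : N ≤ M)
    (hx : x ∈ dyadicI N j) (hx' : x ∈ dyadicI M i) : dyadicI N j ⊆ dyadicI M i := by
  obtain ⟨d, rfl⟩ := Nat.exists_eq_add_of_le hNM
  intro y hy
  rw [mem_dyadicI_iff_ediv] at hx hx' hy ⊢
  rw [pow_add, ← Int.ediv_ediv_of_nonneg (by positivity), hy, ← hx,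
    Int.ediv_ediv_of_nonneg (by positivity), ← pow_add, hx']

lemma subset_or_subset_of_isDyadicZ {I J : Finset ℤ} (hI : IsDyadicZ I) (hJ : IsDyadicZ J)
    (hIJ : ¬Disjoint I J) : I ⊆ J ∨ J ⊆ I := by
  obtain ⟨N, -, j, rfl⟩ := hI
  obtain ⟨M, -, i, rfl⟩ := hJ
  obtain ⟨x, hxI, hxJ⟩ := not_disjoint_iff.1 hIJ
  rcases le_total N M with h | h
  · exact .inl (dyadicI_subset_of_le h hxI hxJ)
  · exact .inr (dyadicI_subset_of_le h hxJ hxI)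

lemma isIntervalZ_of_isDyadicZ {I : Finset ℤ} (hI : IsDyadicZ I) : IsIntervalZ I := by
  obtain ⟨N, -, j, rfl⟩ := hI
  exact ⟨_, _, by linarith [pow_pos (two_pos : (0 : ℤ) < 2) N], rfl⟩

lemma nonempty_of_isDyadicZ {I : Finset ℤ} (hI : IsDyadicZ I) : I.Nonempty := by
  obtain ⟨n, m, hnm, rfl⟩ := isIntervalZ_of_isDyadicZ hI
  exact nonempty_Icc.2 hnm

-- For an interval `I` this is `I` together with its two neighbours of the same length.
noncomputable def triple (I : Finset ℤ) : Finset ℤ := I + Icc (-(#I : ℤ)) #I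

lemma triple_mono {I J : Finset ℤ} (h : I ⊆ J) : triple I ⊆ triple J :=
  add_subset_add h (Icc_subset_Icc (by simpa using card_le_card h) (by simpa using card_le_card h))

lemma card_triple_le {I : Finset ℤ} (hI : IsIntervalZ I) : #(triple I) ≤ 3 * #I := by
  obtain ⟨n, m, hnm, rfl⟩ := hI
  have h := card_le_card (Icc_add_Icc_subset n m (-(#(Icc n m) : ℤ)) #(Icc n m))
  rw [triple]
  simp only [Int.card_Icc] at h ⊢
  have : ((m + 1 - n).toNat : ℤ) = m + 1 - n := Int.toNat_of_nonneg (by omega)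
  refine h.trans (le_of_eq ?_)
  omega

lemma card_biUnion_triple_le (F : Finset (Finset ℤ)) (hF : ∀ I ∈ F, IsDyadicZ I) :
    #(F.biUnion triple) ≤ 3 * #(F.biUnion id) := by
  classical
  set G := {J ∈ F | Maximal (· ∈ F) J}
  have hcover : F.biUnion triple ⊆ G.biUnion triple := by
    intro x hx
    obtain ⟨I, hI, hxI⟩ := mem_biUnion.1 hx
    obtain ⟨J, hIJ, hJ⟩ := F.exists_le_maximal hI
    exact mem_biUnion.2 ⟨J, mem_filter.2 ⟨hJ.1, hJ⟩, triple_mono hIJ hxI⟩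
  have hdisj : (G : Set (Finset ℤ)).PairwiseDisjoint id := by
    intro J hJ J' hJ' hne
    obtain ⟨hJF, hJmax⟩ := mem_filter.1 hJ
    obtain ⟨hJ'F, hJ'max⟩ := mem_filter.1 hJ'
    by_contra hJJ'
    rcases subset_or_subset_of_isDyadicZ (hF J hJF) (hF J' hJ'F) hJJ' with h | h
    · exact hne (hJmax.eq_of_le hJ'F h)
    · exact hne (hJ'max.eq_of_le hJF h).symm
  calc #(F.biUnion triple) ≤ #(G.biUnion triple) := card_le_card hcover
    _ ≤ ∑ J ∈ G, #(triple J) := card_biUnion_le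
    _ ≤ ∑ J ∈ G, 3 * #J := sum_le_sum fun J hJ ↦
        card_triple_le (isIntervalZ_of_isDyadicZ (hF J (mem_filter.1 hJ).1))
    _ = 3 * #(G.biUnion id) := by rw [← mul_sum, card_biUnion hdisj]; rfl
    _ ≤ 3 * #(F.biUnion id) := by
        gcongr
        exact filter_subset _ F

lemma mem_triple_dyadicI {N : ℕ} {j i m : ℤ} (hm : m ∈ dyadicI N j) (hij : |i - j| ≤ 1) :
    m ∈ triple (dyadicI N i) := by
  have h := add_mul_two_pow_mem_dyadicI hm (i - j)
  rw [add_sub_cancel] at h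
  obtain ⟨h₁, h₂⟩ := abs_le.1 hij
  have hpow : (0 : ℤ) < 2 ^ N := by positivity
  refine mem_add.2 ⟨_, h, -((i - j) * 2 ^ N), mem_Icc.2 ⟨?_, ?_⟩, by ring⟩ <;>
    rw [card_dyadicI] <;> push_cast <;> nlinarith

lemma Icc_subset_dyadicI_union {q : ℕ} {k m r : ℤ} (hr : 2 * r < 2 ^ q)
    (hk : m - r ∈ dyadicI q k) : Icc (m - r) (m + r) ⊆ dyadicI q k ∪ dyadicI q (k + 1) := by
  intro x hx
  simp only [dyadicI, mem_union, mem_Icc] at hx hk ⊢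
  by_cases hxk : x ≤ k * 2 ^ q
  · exact .inl ⟨by linarith, hxk⟩
  · exact .inr ⟨by linarith, by linarith⟩

lemma exists_two_pow_between {r : ℕ} (hr : 0 < r) : ∃ q, 0 < q ∧ 2 * r < 2 ^ q ∧ 2 ^ q ≤ 4 * r :=
  ⟨Nat.log 2 (2 * r) + 1, Nat.succ_pos _, Nat.lt_pow_succ_log_self one_lt_two _, by
    rw [pow_succ]; linarith [Nat.pow_log_le_self 2 (show 2 * r ≠ 0 by omega)]⟩

noncomputable def Mtriple (a : ℤ → ℝ) (m : ℤ) : ℝ≥0∞ :=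
  ⨆ (I : Finset ℤ) (_ : IsDyadicZ I) (_ : m ∈ triple I), (∑ k ∈ I, ENNReal.ofReal |a k|) / #I

lemma avg_le_Md {a : ℤ → ℝ} {I : Finset ℤ} (hI : IsDyadicZ I) {k : ℤ} (hk : k ∈ I) :
    (∑ n ∈ I, ENNReal.ofReal |a n|) / #I ≤ Md a k :=
  le_iSup₂_of_le I hI (le_iSup_of_le hk le_rfl)

lemma sum_le_Mtriple_mul_card {a : ℤ → ℝ} {I : Finset ℤ} (hI : IsDyadicZ I) {m : ℤ}
    (hm : m ∈ triple I) : ∑ k ∈ I, ENNReal.ofReal |a k| ≤ Mtriple a m * #I := by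
  rw [← ENNReal.div_le_iff (by simpa using (nonempty_of_isDyadicZ hI).ne_empty)
    (ENNReal.natCast_ne_top _)]
  exact le_iSup₂_of_le I hI (le_iSup_of_le hm le_rfl)

lemma Mc_le_four_mul_Mtriple (a : ℤ → ℝ) (m : ℤ) : Mc a m ≤ 4 * Mtriple a m := by
  refine iSup₂_le fun r hr ↦ ?_
  have hshift : ∑ n ∈ Icc (-(r : ℤ)) r, ENNReal.ofReal |a (m - n)|
      = ∑ k ∈ Icc (m - r) (m + r), ENNReal.ofReal |a k| :=
    sum_nbij' (m - ·) (m - ·) (fun n hn ↦ by simp only [mem_Icc] at hn ⊢; omega)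
      (fun k hk ↦ by simp only [mem_Icc] at hk ⊢; omega) (fun _ _ ↦ by ring) (fun _ _ ↦ by ring)
      fun _ _ ↦ rfl
  obtain ⟨q, hq, hrq, hqr⟩ := exists_two_pow_between hr
  obtain ⟨k, hk⟩ := exists_mem_dyadicI q (m - r)
  have hcover := Icc_subset_dyadicI_union (m := m) (by exact_mod_cast hrq) hk
  have hmem : m ∈ dyadicI q k ∪ dyadicI q (k + 1) := hcover (mem_Icc.2 ⟨by omega, by omega⟩)
  have hmk : m ∈ triple (dyadicI q k) ∧ m ∈ triple (dyadicI q (k + 1)) := by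
    rcases mem_union.1 hmem with h | h <;>
      exact ⟨mem_triple_dyadicI h (by simp), mem_triple_dyadicI h (by simp)⟩
  have hdy : ∀ j, IsDyadicZ (dyadicI q j) := fun j ↦ ⟨q, hq, j, rfl⟩
  rw [hshift, ENNReal.div_le_iff (by simp [hr.ne']) (ENNReal.mul_ne_top (by simp) (by simp))]
  calc ∑ x ∈ Icc (m - r) (m + r), ENNReal.ofReal |a x|
      ≤ ∑ x ∈ dyadicI q k ∪ dyadicI q (k + 1), ENNReal.ofReal |a x| :=
        sum_le_sum_of_subset hcover
    _ ≤ ∑ x ∈ dyadicI q k, ENNReal.ofReal |a x| + ∑ x ∈ dyadicI q (k + 1), ENNReal.ofReal |a x| :=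
        sum_union_inter (f := fun x ↦ ENNReal.ofReal |a x|) ▸ le_self_add
    _ ≤ Mtriple a m * #(dyadicI q k) + Mtriple a m * #(dyadicI q (k + 1)) :=
        add_le_add (sum_le_Mtriple_mul_card (hdy k) hmk.1) (sum_le_Mtriple_mul_card (hdy _) hmk.2)
    _ = Mtriple a m * ((2 * 2 ^ q : ℕ) : ℝ≥0∞) := by
        rw [card_dyadicI, card_dyadicI]; push_cast; ring
    _ ≤ Mtriple a m * ((8 * r : ℕ) : ℝ≥0∞) :=
        mul_le_mul_right (by exact_mod_cast (by omega : 2 * 2 ^ q ≤ 8 * r)) _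
    _ = 4 * Mtriple a m * (2 * r) := by push_cast; ring

lemma count_lt_Mtriple_le (a : ℤ → ℝ) {t : ℝ≥0∞} (hfin : {m | t < Md a m}.Finite) :
    Measure.count {m | t < Mtriple a m} ≤ 3 * Measure.count {m | t < Md a m} := by
  classical
  set F := {I ∈ hfin.toFinset.powerset | IsDyadicZ I}
  have hF : ∀ I ∈ F, IsDyadicZ I := fun I hI ↦ (mem_filter.1 hI).2
  have hlevel : {m | t < Mtriple a m} ⊆ ↑(F.biUnion triple) := by
    intro m hm
    obtain ⟨I, hm⟩ := lt_iSup_iff.1 (show t < Mtriple a m from hm)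
    obtain ⟨hI, hm⟩ := lt_iSup_iff.1 hm
    obtain ⟨hmI, havg⟩ := lt_iSup_iff.1 hm
    refine mem_biUnion.2 ⟨I, mem_filter.2 ⟨mem_powerset.2 fun k hk ↦ ?_, hI⟩, hmI⟩
    exact hfin.mem_toFinset.2 (havg.trans_le (avg_le_Md hI hk))
  have hΩ : F.biUnion id ⊆ hfin.toFinset :=
    biUnion_subset.2 fun I hI ↦ mem_powerset.1 (mem_filter.1 hI).1
  calc Measure.count {m | t < Mtriple a m}
      ≤ #(F.biUnion triple) := (measure_mono hlevel).trans (Measure.count_apply_finset _).le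
    _ ≤ 3 * #(F.biUnion id) := by exact_mod_cast card_biUnion_triple_le F hF
    _ ≤ 3 * #hfin.toFinset := by gcongr
    _ = 3 * Measure.count {m | t < Md a m} := by rw [Measure.count_apply_finite _ hfin]

lemma le_tsum_rpow_rpow_inv {ι : Type*} (f : ι → ℝ≥0∞) {p : ℝ} (hp : 0 < p) (i : ι) :
    f i ≤ (∑' j, f j ^ p) ^ p⁻¹ :=
  calc f i = (f i ^ p) ^ p⁻¹ := by rw [← ENNReal.rpow_mul, mul_inv_cancel₀ hp.ne', ENNReal.rpow_one]
    _ ≤ (∑' j, f j ^ p) ^ p⁻¹ := by gcongr; exact ENNReal.le_tsum i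

lemma finite_setOf_lt_of_tsum_rpow_ne_top {ι : Type*} {f : ι → ℝ≥0∞} {p : ℝ} (hp : 0 < p)
    (hf : ∑' i, f i ^ p ≠ ⊤) {t : ℝ≥0∞} (ht : 0 < t) (ht' : t ≠ ⊤) : {i | t < f i}.Finite :=
  (ENNReal.finite_const_le_of_tsum_ne_top hf (ENNReal.rpow_pos ht ht').ne').subset
    fun _ hi ↦ ENNReal.rpow_le_rpow (le_of_lt hi) hp.le

lemma Mtriple_le_tsum_rpow_rpow_inv (a : ℤ → ℝ) {p : ℝ} (hp : 0 < p) (m : ℤ) :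
    Mtriple a m ≤ (∑' k, Md a k ^ p) ^ p⁻¹ := by
  refine iSup₂_le fun I hI ↦ iSup_le fun _ ↦ ?_
  obtain ⟨k, hk⟩ := nonempty_of_isDyadicZ hI
  exact (avg_le_Md hI hk).trans (le_tsum_rpow_rpow_inv _ hp k)

lemma lintegral_rpow_eq_lintegral_meas_lt_mul_of_ne_top {α : Type*} [MeasurableSpace α]
    {μ : Measure α} {f : α → ℝ≥0∞} (hf : AEMeasurable f μ) (hf_top : ∀ x, f x ≠ ⊤) {p : ℝ}
    (hp : 0 < p) :
    ∫⁻ x, f x ^ p ∂μ = ENNReal.ofReal p *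
      ∫⁻ t in Set.Ioi 0, μ {x | ENNReal.ofReal t < f x} * ENNReal.ofReal (t ^ (p - 1)) := by
  have hpow : ∀ x, f x ^ p = ENNReal.ofReal ((f x).toReal ^ p) := fun x ↦ by
    rw [← ENNReal.ofReal_rpow_of_nonneg ENNReal.toReal_nonneg hp.le,
      ENNReal.ofReal_toReal (hf_top x)]
  simp_rw [hpow]
  rw [lintegral_rpow_eq_lintegral_meas_lt_mul μ (.of_forall fun _ ↦ ENNReal.toReal_nonneg)
    hf.ennreal_toReal hp]
  congr 1
  refine setLIntegral_congr_fun measurableSet_Ioi fun t ht ↦ ?_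
  simp_rw [← ENNReal.ofReal_lt_iff_lt_toReal (le_of_lt ht) (hf_top _)]

lemma lintegral_rpow_le_of_meas_lt_le {α : Type*} [MeasurableSpace α] {μ : Measure α}
    {f g : α → ℝ≥0∞} (hf : AEMeasurable f μ) (hg : AEMeasurable g μ) (hf_top : ∀ x, f x ≠ ⊤)
    (hg_top : ∀ x, g x ≠ ⊤) {p : ℝ} (hp : 0 < p) {C : ℝ≥0∞} (hC : C ≠ ⊤)
    (h : ∀ t : ℝ≥0∞, 0 < t → t ≠ ⊤ → μ {x | t < f x} ≤ C * μ {x | t < g x}) :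
    ∫⁻ x, f x ^ p ∂μ ≤ C * ∫⁻ x, g x ^ p ∂μ := by
  rw [lintegral_rpow_eq_lintegral_meas_lt_mul_of_ne_top hf hf_top hp,
    lintegral_rpow_eq_lintegral_meas_lt_mul_of_ne_top hg hg_top hp, mul_left_comm,
    ← lintegral_const_mul' C _ hC]
  gcongr ENNReal.ofReal p * ?_
  refine lintegral_mono_ae ?_
  filter_upwards [ae_restrict_mem measurableSet_Ioi] with t ht
  rw [← mul_assoc]
  gcongr
  exact h _ (ENNReal.ofReal_pos.2 ht) ENNReal.ofReal_ne_top

end DyadicMaximal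

open DyadicMaximal

/-- `‖M′a‖_{ℓᵖ}ᵖ ≤ 3·4ᵖ ‖M_d a‖_{ℓᵖ}ᵖ` whenever `M_d a ∈ ℓᵖ(ℤ)`, `1 < p < ∞`. -/
theorem statement3 (p : ℝ) (hp1 : 1 < p) (a : ℤ → ℝ)
    (hMd : (∑' m : ℤ, Md a m ^ p) ≠ ⊤) :
    ∑' m : ℤ, Mc a m ^ p ≤ 3 * (4 : ℝ≥0∞) ^ p * ∑' m : ℤ, Md a m ^ p := by
  have hp : 0 < p := zero_lt_one.trans hp1
  have hbound : (∑' k, Md a k ^ p) ^ p⁻¹ ≠ ⊤ := ENNReal.rpow_ne_top_of_nonneg (by positivity) hMd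
  have hMtriple : ∑' m, Mtriple a m ^ p ≤ 3 * ∑' m, Md a m ^ p := by
    simp only [← lintegral_count]
    exact lintegral_rpow_le_of_meas_lt_le (measurable_of_countable _).aemeasurable
      (measurable_of_countable _).aemeasurable
      (fun m ↦ ne_top_of_le_ne_top hbound (Mtriple_le_tsum_rpow_rpow_inv a hp m))
      (fun m ↦ ne_top_of_le_ne_top hbound (le_tsum_rpow_rpow_inv _ hp m)) hp (by norm_num)
      fun t ht ht' ↦ count_lt_Mtriple_le a (finite_setOf_lt_of_tsum_rpow_ne_top hp hMd ht ht')
  calc ∑' m, Mc a m ^ p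
      ≤ ∑' m, (4 * Mtriple a m) ^ p :=
        ENNReal.tsum_le_tsum fun m ↦ ENNReal.rpow_le_rpow (Mc_le_four_mul_Mtriple a m) hp.le
    _ = 4 ^ p * ∑' m, Mtriple a m ^ p := by
        simp_rw [ENNReal.mul_rpow_of_nonneg _ _ hp.le, ENNReal.tsum_mul_left]
    _ ≤ 4 ^ p * (3 * ∑' m, Md a m ^ p) := by gcongr
    _ = 3 * 4 ^ p * ∑' m, Md a m ^ p := by ring
end

section
/- The Hardy–Littlewood maximal operator M is of weak type (1,1) on ℤ: there exists a constant C > 0 such that for every a ∈ ℓ^1(ℤ) and every λ > 0, the cardinality of {m ∈ ℤ : M a(m) > λ} is at most (C/λ) Σ_{k∈ℤ} |a(k)|. -/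
open scoped ENNReal
open MeasureTheory

/-! Vitali covering argument, with `C = 3`. Each point `m` of `{λ < M a}` lies in an interval
`I_m` on which the average of `|a|` exceeds `λ`. Among finitely many such points take one whose
interval `I₀` is longest: every point whose interval meets `I₀` lies in the tripled interval, so
there are at most `3 |I₀| ≤ (3/λ) ∑_{I₀} |a|` of them, while the remaining points have intervals
disjoint from `I₀` and are handled by induction. -/

open Finset

lemma mem_Icc_triple_of_not_disjoint {l h u v m : ℤ} (hm : m ∈ Icc l h)
    (hmeet : ¬Disjoint (Icc l h) (Icc u v)) (hlen : h - l ≤ v - u) :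
    m ∈ Icc (2 * u - v) (2 * v - u) := by
  obtain ⟨x, hxlh, hxuv⟩ := not_disjoint_iff.mp hmeet
  simp only [mem_Icc] at hm hxlh hxuv ⊢
  omega

lemma card_Icc_triple_le (u v : ℤ) : #(Icc (2 * u - v) (2 * v - u)) ≤ 3 * #(Icc u v) := by
  simp only [Int.card_Icc]
  omega

theorem mul_card_le_three_mul_sum_of_Icc_cover (f : ℤ → ℝ≥0∞) (lam : ℝ≥0∞) (lo hi : ℤ → ℤ)
    (F A : Finset ℤ)
    (hF : ∀ m ∈ F, m ∈ Icc (lo m) (hi m) ∧ Icc (lo m) (hi m) ⊆ A ∧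
      lam * #(Icc (lo m) (hi m)) ≤ ∑ n ∈ Icc (lo m) (hi m), f n) :
    lam * #F ≤ 3 * ∑ n ∈ A, f n := by
  classical
  induction F using Finset.strongInduction generalizing A with
  | _ F ih =>
  rcases F.eq_empty_or_nonempty with rfl | hne
  · simp
  obtain ⟨m₀, hm₀, hlongest⟩ := F.exists_max_image (fun m => hi m - lo m) hne
  obtain ⟨hm₀I₀, hI₀A, hI₀avg⟩ := hF m₀ hm₀
  set I₀ := Icc (lo m₀) (hi m₀)
  set far := F.filter fun m => Disjoint (Icc (lo m) (hi m)) I₀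
  set near := F.filter fun m => ¬Disjoint (Icc (lo m) (hi m)) I₀
  have hfar_ssubset : far ⊂ F :=
    filter_ssubset.mpr ⟨m₀, hm₀, fun hd => disjoint_left.mp hd hm₀I₀ hm₀I₀⟩
  have hnear_card : #near ≤ 3 * #I₀ := by
    refine le_trans (card_le_card fun m hm => ?_) (card_Icc_triple_le _ _)
    obtain ⟨hmF, hmeet⟩ := mem_filter.mp hm
    exact mem_Icc_triple_of_not_disjoint (hF m hmF).1 hmeet (hlongest m hmF)
  have hfar : lam * #far ≤ 3 * ∑ n ∈ A \ I₀, f n := by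
    refine ih far hfar_ssubset _ fun m hm => ?_
    obtain ⟨hmF, hdisj⟩ := mem_filter.mp hm
    obtain ⟨hmI, hIA, hIavg⟩ := hF m hmF
    exact ⟨hmI, subset_sdiff.mpr ⟨hIA, hdisj⟩, hIavg⟩
  have hnear : lam * #near ≤ 3 * ∑ n ∈ I₀, f n :=
    calc lam * #near ≤ lam * (3 * #I₀ : ℕ) := by gcongr
      _ = 3 * (lam * #I₀) := by push_cast; ring
      _ ≤ 3 * ∑ n ∈ I₀, f n := by gcongr
  calc lam * #F = lam * #far + lam * #near := by
        rw [← card_filter_add_card_filter_not (s := F)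
          (fun m => Disjoint (Icc (lo m) (hi m)) I₀)]
        push_cast
        ring
    _ ≤ 3 * ∑ n ∈ A \ I₀, f n + 3 * ∑ n ∈ I₀, f n := add_le_add hfar hnear
    _ = 3 * ∑ n ∈ A, f n := by rw [← mul_add, sum_sdiff hI₀A]

lemma exists_Icc_of_lt_Mop {a : ℤ → ℝ} {lam : ℝ≥0∞} {m : ℤ} (h : lam < Mop a m) :
    ∃ u v, m ∈ Icc u v ∧ lam * #(Icc u v) < ∑ n ∈ Icc u v, ENNReal.ofReal |a n| := by
  simp only [Mop, lt_iSup_iff] at h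
  obtain ⟨_, ⟨u, v, huv, rfl⟩, hm, hlt⟩ := h
  have hcard : (#(Icc u v) : ℝ≥0∞) ≠ 0 := by
    rw [Int.card_Icc]
    exact_mod_cast (by omega : (v + 1 - u).toNat ≠ 0)
  exact ⟨u, v, hm, (ENNReal.lt_div_iff_mul_lt (.inl hcard) (.inl (by simp))).mp hlt⟩

lemma mul_card_le_of_subset_lt_Mop (a : ℤ → ℝ) (lam : ℝ≥0∞) (F : Finset ℤ)
    (hF : ↑F ⊆ {m | lam < Mop a m}) :
    lam * #F ≤ 3 * ∑' n, ENNReal.ofReal |a n| := by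
  classical
  have hinterval : ∀ m ∈ F, ∃ u v, m ∈ Icc u v ∧
      lam * #(Icc u v) < ∑ n ∈ Icc u v, ENNReal.ofReal |a n| :=
    fun m hm => exists_Icc_of_lt_Mop (hF hm)
  choose! lo hi hmem havg using hinterval
  calc lam * #F ≤ 3 * ∑ n ∈ F.biUnion fun m => Icc (lo m) (hi m), ENNReal.ofReal |a n| :=
        mul_card_le_three_mul_sum_of_Icc_cover _ lam lo hi F _ fun m hm =>
          ⟨hmem m hm, subset_biUnion_of_mem (fun m => Icc (lo m) (hi m)) hm, (havg m hm).le⟩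
    _ ≤ 3 * ∑' n, ENNReal.ofReal |a n| := by gcongr; exact ENNReal.sum_le_tsum _

lemma mul_count_lt_Mop_le (a : ℤ → ℝ) (lam : ℝ≥0∞) :
    lam * Measure.count {m | lam < Mop a m} ≤ 3 * ∑' n, ENNReal.ofReal |a n| := by
  rw [Measure.count_apply (by measurability), mul_comm, ← ENNReal.tsum_set_const]
  refine ENNReal.summable.tsum_le_of_sum_le fun F => ?_
  rw [sum_const, nsmul_eq_mul, mul_comm, ← card_map (Function.Embedding.subtype _)]
  refine mul_card_le_of_subset_lt_Mop a lam _ fun m hm => ?_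
  obtain ⟨⟨m, hmE⟩, -, rfl⟩ := mem_map.mp hm
  exact hmE

/-- The Hardy–Littlewood maximal operator on ℤ is of weak type (1,1). -/
theorem statement8 :
    ∃ C : ℝ, 0 < C ∧
      ∀ a : ℤ → ℝ, (Summable fun m : ℤ => |a m|) → ∀ lam : ℝ, 0 < lam →
        Measure.count {m : ℤ | ENNReal.ofReal lam < Mop a m} ≤
          ENNReal.ofReal (C / lam * ∑' k : ℤ, |a k|) := by
  refine ⟨3, by norm_num, fun a ha lam hlam => ?_⟩
  have hsum : ENNReal.ofReal (3 / lam * ∑' k, |a k|) =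
      (3 * ∑' n, ENNReal.ofReal |a n|) / ENNReal.ofReal lam := by
    rw [div_mul_eq_mul_div, ENNReal.ofReal_div_of_pos hlam,
      ENNReal.ofReal_mul (by norm_num), ENNReal.ofReal_tsum_of_nonneg (fun _ => abs_nonneg _) ha,
      ENNReal.ofReal_ofNat]
  rw [hsum, ENNReal.le_div_iff_mul_le (.inl (ENNReal.ofReal_pos.mpr hlam).ne') (.inl (by simp)),
    mul_comm]
  exact mul_count_lt_Mop_le a _
end
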